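/- arXiv:1411.7451 — 2 statements merged into one kernel-verified Lean document; each statement's English description precedes it below -/
import Mathlib

section
/- If V : ℝ → ℝ is twice continuously differentiable, then the one-step impulse (trigonometric) integrator Φ is differentiable at every point of ℝ², and the determinant of its total derivative (Jacobian) equals 1 at every point; in particular Φ preserves the standard area (symplectic) form on ℝ². -/
open Real

/-- The one-step impulse (trigonometric) integrator for the Hamiltonian
`H(x,p) = p²/(2m) + mω²x²/2 + V(x)` : half-kick ∘ harmonic rotation ∘ half-kick. -/
noncomputable def impulseStep (m ω h : ℝ) (V : ℝ → ℝ) : ℝ × ℝ → ℝ × ℝ :=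
  fun z =>
    let x := z.1
    let p := z.2
    let pbar := p - (h / 2) * deriv V x
    let X := Real.cos (h * ω) * x + (Real.sin (h * ω) / (m * ω)) * pbar
    let pminus := -(m * ω) * Real.sin (h * ω) * x + Real.cos (h * ω) * pbar
    (X, pminus - (h / 2) * deriv V X)

/-! Each half-kick `(x, p) ↦ (x, p - (h/2) V'(x))` is a shear whose Jacobian is unipotent, and the
harmonic rotation in between is linear with determinant `cos² + sin² = 1`; by the chain rule and
multiplicativity of the determinant, the Jacobian of the composite has determinant `1`. -/

def shear {α : Type*} [Sub α] (f : α → α) (z : α × α) : α × α := (z.1, z.2 - f z.1)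

theorem ContinuousLinearMap.det_comp {R M : Type*} [CommRing R] [TopologicalSpace M]
    [AddCommGroup M] [Module R M] (A B : M →L[R] M) : (A.comp B).det = A.det * B.det :=
  LinearMap.det_comp (A : M →ₗ[R] M) B

section Shear

variable {𝕜 : Type*} [NontriviallyNormedField 𝕜] [CompleteSpace 𝕜]

theorem hasFDerivAt_shear {f : 𝕜 → 𝕜} {f' : 𝕜} {z : 𝕜 × 𝕜} (hf : HasDerivAt f f' z.1) :
    HasFDerivAt (shear f)
      (Matrix.toLin (.finTwoProd 𝕜) (.finTwoProd 𝕜) !![1, 0; -f', 1]).toContinuousLinearMap z := by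
  have hfst : HasFDerivAt (fun w : 𝕜 × 𝕜 => f w.1) (f' • ContinuousLinearMap.fst 𝕜 𝕜 𝕜) z :=
    hf.comp_hasFDerivAt (f := Prod.fst) z hasFDerivAt_fst
  refine (hasFDerivAt_fst.prodMk (hasFDerivAt_snd.sub hfst)).congr_fderiv ?_
  ext <;> simp

theorem differentiableAt_shear {f : 𝕜 → 𝕜} {z : 𝕜 × 𝕜} (hf : DifferentiableAt 𝕜 f z.1) :
    DifferentiableAt 𝕜 (shear f) z :=
  (hasFDerivAt_shear hf.hasDerivAt).differentiableAt

theorem det_fderiv_shear {f : 𝕜 → 𝕜} {z : 𝕜 × 𝕜} (hf : DifferentiableAt 𝕜 f z.1) :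
    (fderiv 𝕜 (shear f) z).det = 1 := by
  rw [(hasFDerivAt_shear hf.hasDerivAt).fderiv, LinearMap.det_toContinuousLinearMap,
    LinearMap.det_toLin, Matrix.det_fin_two_of]
  ring

theorem det_fderiv_shear_comp_comp_shear {f g : 𝕜 → 𝕜} (A : 𝕜 × 𝕜 →L[𝕜] 𝕜 × 𝕜) {z : 𝕜 × 𝕜}
    (hf : DifferentiableAt 𝕜 f z.1) (hg : DifferentiableAt 𝕜 g (A (shear f z)).1) :
    DifferentiableAt 𝕜 (shear g ∘ A ∘ shear f) z ∧
      (fderiv 𝕜 (shear g ∘ A ∘ shear f) z).det = A.det := by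
  have hAf : DifferentiableAt 𝕜 (A ∘ shear f) z :=
    A.differentiableAt.comp z (differentiableAt_shear hf)
  refine ⟨(differentiableAt_shear hg).comp z hAf, ?_⟩
  rw [fderiv_comp z (differentiableAt_shear hg) hAf,
    fderiv_comp z A.differentiableAt (differentiableAt_shear hf), ContinuousLinearMap.det_comp,
    ContinuousLinearMap.det_comp, Function.comp_apply, det_fderiv_shear hg, det_fderiv_shear hf,
    A.fderiv]
  ring

end Shear

/-- The exact time-`h` flow of the harmonic part `p²/(2m) + mω²x²/2` in the coordinates `(x, p)`. -/
noncomputable def harmonicFlowMatrix (m ω h : ℝ) : Matrix (Fin 2) (Fin 2) ℝ :=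
  !![cos (h * ω), sin (h * ω) / (m * ω); -(m * ω) * sin (h * ω), cos (h * ω)]

theorem det_harmonicFlowMatrix {m ω : ℝ} (h : ℝ) (hm : m ≠ 0) (hω : ω ≠ 0) :
    (harmonicFlowMatrix m ω h).det = 1 := by
  have hcross : sin (h * ω) / (m * ω) * (-(m * ω) * sin (h * ω)) = -sin (h * ω) ^ 2 := by
    field_simp
  rw [harmonicFlowMatrix, Matrix.det_fin_two_of]
  linear_combination sin_sq_add_cos_sq (h * ω) - hcross

theorem impulseStep_eq_shear_comp_harmonicFlow_comp_shear (m ω h : ℝ) (V : ℝ → ℝ) :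
    impulseStep m ω h V =
      shear (fun x => h / 2 * deriv V x) ∘
        (Matrix.toLin (.finTwoProd ℝ) (.finTwoProd ℝ) (harmonicFlowMatrix m ω h)) ∘
        shear (fun x => h / 2 * deriv V x) := by
  funext z
  simp [impulseStep, shear, harmonicFlowMatrix]

theorem impulseStep_differentiable_and_jacobian_det_eq_one_general
    (m ω h : ℝ) (hm : 0 < m) (hω : 0 < ω)
    (V : ℝ → ℝ) (hV : ContDiff ℝ 2 V) :
    ∀ z : ℝ × ℝ, DifferentiableAt ℝ (impulseStep m ω h V) z ∧
      (fderiv ℝ (impulseStep m ω h V) z).det = 1 := by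
  intro z
  have hkick : Differentiable ℝ fun x => h / 2 * deriv V x :=
    hV.differentiable_deriv_two.const_mul _
  have hsplit := det_fderiv_shear_comp_comp_shear
    (Matrix.toLin (.finTwoProd ℝ) (.finTwoProd ℝ) (harmonicFlowMatrix m ω h)).toContinuousLinearMap
    (hkick z.1) (hkick _)
  rw [LinearMap.det_toContinuousLinearMap, LinearMap.det_toLin,
    det_harmonicFlowMatrix h hm.ne' hω.ne'] at hsplit
  rw [impulseStep_eq_shear_comp_harmonicFlow_comp_shear]
  exact hsplit

/-- if `V` is C², the impulse integrator is differentiable everywhere and its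
Jacobian determinant is `1` at every point, i.e. it preserves the standard area form on ℝ². -/
theorem impulseStep_differentiable_and_jacobian_det_eq_one
    (m ω h : ℝ) (hm : 0 < m) (hω : 0 < ω) (hh : 0 < h)
    (V : ℝ → ℝ) (hV : ContDiff ℝ 2 V) :
    ∀ z : ℝ × ℝ, DifferentiableAt ℝ (impulseStep m ω h V) z ∧
      (fderiv ℝ (impulseStep m ω h V) z).det = 1 :=
  impulseStep_differentiable_and_jacobian_det_eq_one_general m ω h hm hω V hV
end

section
/- If V : ℝ → ℝ is differentiable and (xₙ, pₙ) = Φⁿ(x₀, p₀) for n ≥ 0, then the positions generated by the impulse integrator satisfy the two-step recurrence x_{n+1} − 2·cos(hω)·xₙ + x_{n−1} = −(h²/m)·(sin(hω)/(hω))·V'(xₙ) for every n ≥ 1. -/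
/-! Eliminating the momenta: the two half-kicks between consecutive rotations merge into one full
kick `h V'(xₙ)`, and a rotation by `θ` satisfies `R(θ)² = 2 cos θ · R(θ) − 1` (Cayley–Hamilton),
which produces the left-hand side of the recurrence. -/

open Real

namespace impulseStep

variable (m ω h : ℝ) (V : ℝ → ℝ)

theorem fst_apply (z : ℝ × ℝ) :
    (impulseStep m ω h V z).1 =
      cos (h * ω) * z.1 + sin (h * ω) / (m * ω) * (z.2 - h / 2 * deriv V z.1) :=
  rfl

theorem snd_apply (z : ℝ × ℝ) :
    (impulseStep m ω h V z).2 =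
      -(m * ω) * sin (h * ω) * z.1 + cos (h * ω) * (z.2 - h / 2 * deriv V z.1) -
        h / 2 * deriv V (impulseStep m ω h V z).1 :=
  rfl

theorem fst_two_step_recurrence (hm : m ≠ 0) (hω : ω ≠ 0) (z : ℝ × ℝ) :
    (impulseStep m ω h V (impulseStep m ω h V z)).1 - 2 * cos (h * ω) * (impulseStep m ω h V z).1
        + z.1 = -(h * sin (h * ω) / (m * ω)) * deriv V (impulseStep m ω h V z).1 := by
  rw [fst_apply _ _ _ _ (impulseStep m ω h V z), snd_apply, fst_apply _ _ _ _ z]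
  field_simp
  linear_combination (-2 * m * ω * z.1) * sin_sq_add_cos_sq (h * ω)

end impulseStep

theorem impulseStep_two_step_recurrence_general
    (m ω h : ℝ) (hm : 0 < m) (hω : 0 < ω) (hh : 0 < h)
    (V : ℝ → ℝ)
    (x p : ℕ → ℝ)
    (hxp : ∀ n : ℕ, (x n, p n) = (impulseStep m ω h V)^[n] (x 0, p 0)) :
    ∀ n : ℕ, 1 ≤ n →
      x (n + 1) - 2 * Real.cos (h * ω) * x n + x (n - 1) =
        -(h ^ 2 / m) * (Real.sin (h * ω) / (h * ω)) * deriv V (x n) := by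
  have step : ∀ n, (x (n + 1), p (n + 1)) = impulseStep m ω h V (x n, p n) := fun n => by
    rw [hxp, hxp n, Function.iterate_succ_apply']
  rintro n hn
  obtain ⟨k, rfl⟩ := Nat.exists_eq_add_of_le' hn
  have hx₁ : x (k + 1) = (impulseStep m ω h V (x k, p k)).1 := by rw [← step]
  have hx₂ : x (k + 1 + 1) = (impulseStep m ω h V (impulseStep m ω h V (x k, p k))).1 := by
    rw [← step, ← step]
  have hsinc : -(h ^ 2 / m) * (sin (h * ω) / (h * ω)) = -(h * sin (h * ω) / (m * ω)) := by
    field_simp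
  rw [Nat.add_sub_cancel, hsinc, hx₂, hx₁]
  exact impulseStep.fst_two_step_recurrence m ω h V hm.ne' hω.ne' (x k, p k)

/-- the positions generated by the impulse integrator satisfy the two-step
recurrence `x_{n+1} − 2 cos(hω) xₙ + x_{n−1} = −(h²/m)·(sin(hω)/(hω))·V'(xₙ)` for `n ≥ 1`. -/
theorem impulseStep_two_step_recurrence
    (m ω h : ℝ) (hm : 0 < m) (hω : 0 < ω) (hh : 0 < h)
    (V : ℝ → ℝ) (hV : Differentiable ℝ V)
    (x p : ℕ → ℝ)
    (hxp : ∀ n : ℕ, (x n, p n) = (impulseStep m ω h V)^[n] (x 0, p 0)) :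
    ∀ n : ℕ, 1 ≤ n →
      x (n + 1) - 2 * Real.cos (h * ω) * x n + x (n - 1) =
        -(h ^ 2 / m) * (Real.sin (h * ω) / (h * ω)) * deriv V (x n) :=
  impulseStep_two_step_recurrence_general m ω h hm hω hh V x p hxp
end
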